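/- arXiv:1510.08814 — 3 statements merged into one kernel-verified Lean document; each statement's English description precedes it below -/
import Mathlib

section
/- Let H be a Hilbert space, K a bounded self-adjoint operator on H with δ·P ≤ K ≤ (1−δ)·P for some 0 < δ ≤ 1/2 and an orthogonal projection P, and let f ∈ range(P) with ‖f‖² = δ. Then the operators L₀ = K − (1/2) f⊗f* and L₁ = K + (1/2) f⊗f* satisfy 0 ≤ L₀ ≤ I and 0 ≤ L₁ ≤ I. -/
/-!
With `T = f ⊗ f*`, Cauchy–Schwarz and `f = P f` give `0 ≤ T ≤ ‖f‖² P = δ P`. Each of the four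
operators is then a sum of the positive operators `K - δ P`, `(1 - δ) P - K`, `1 - P`, `δ P`,
`T / 2` and `δ P - T / 2`.
-/

open scoped InnerProductSpace ComplexOrder
open ContinuousLinearMap InnerProductSpace RCLike

section
variable {𝕜 E : Type*} [RCLike 𝕜] [NormedAddCommGroup E] [InnerProductSpace 𝕜 E] [CompleteSpace E]

theorem rankOne_self_le_norm_sq_smul {P : E →L[𝕜] E} (hP : IsStarProjection P) {f : E}
    (hf : P f = f) : rankOne 𝕜 f f ≤ ((‖f‖ ^ 2 : ℝ) : 𝕜) • P := by
  have hPsymm : ∀ x y, ⟪P x, y⟫_𝕜 = ⟪x, P y⟫_𝕜 := hP.isSelfAdjoint.isSymmetric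
  rw [le_def, isPositive_def']
  refine ⟨(IsSelfAdjoint.smul (conj_ofReal _) hP.isSelfAdjoint).sub
    (isSymmetric_rankOne_self f).isSelfAdjoint, fun x => ?_⟩
  have hfx : ⟪f, x⟫_𝕜 = ⟪f, P x⟫_𝕜 := by
    conv_lhs => rw [← hf]
    exact hPsymm f x
  have hPx : re ⟪P x, x⟫_𝕜 = ‖P x‖ ^ 2 := by
    have hPP : P (P x) = P x := DFunLike.congr_fun hP.isIdempotentElem.eq x
    rw [← inner_self_eq_norm_sq (𝕜 := 𝕜), ← hPsymm, hPP]
  have hCS : ‖⟪f, x⟫_𝕜‖ ≤ ‖f‖ * ‖P x‖ := hfx ▸ norm_inner_le_norm f (P x)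
  calc (0 : ℝ) ≤ (‖f‖ * ‖P x‖) ^ 2 - ‖⟪f, x⟫_𝕜‖ ^ 2 := by
        nlinarith [norm_nonneg ⟪f, x⟫_𝕜]
    _ = _ := by
      simp only [reApplyInnerSelf, sub_apply, smul_apply, rankOne_apply, inner_sub_left,
        inner_smul_left, conj_ofReal, RCLike.conj_mul, map_sub, re_ofReal_mul, hPx, ← ofReal_pow,
        ofReal_re]
      ring

end

open ContinuousLinearMap in
theorem perturbed_kernels_are_contractions_general
    {H : Type*} [NormedAddCommGroup H] [InnerProductSpace ℂ H] [CompleteSpace H]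
    (K P : H →L[ℂ] H)
    (hPidem : IsIdempotentElem P) (hPsa : IsSelfAdjoint P)
    (δ : ℝ) (hδ0 : 0 < δ)
    (hlow : (K - (δ : ℂ) • P).IsPositive)
    (hup : ((((1 - δ : ℝ)) : ℂ) • P - K).IsPositive)
    (f : H) (hf : P f = f) (hfn : ‖f‖ ^ 2 = δ) :
    ((K - (1/2 : ℂ) • ((innerSL ℂ f).smulRight f)).IsPositive ∧
      ((1 : H →L[ℂ] H) - (K - (1/2 : ℂ) • ((innerSL ℂ f).smulRight f))).IsPositive) ∧
    ((K + (1/2 : ℂ) • ((innerSL ℂ f).smulRight f)).IsPositive ∧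
      ((1 : H →L[ℂ] H) - (K + (1/2 : ℂ) • ((innerSL ℂ f).smulRight f))).IsPositive) := by
  have hP : IsStarProjection P := ⟨hPidem, hPsa⟩
  rw [← rankOne_def]
  have hTP : ((δ : ℂ) • P - rankOne ℂ f f).IsPositive := hfn ▸ rankOne_self_le_norm_sq_smul hP hf
  have hδP : ((δ : ℂ) • P).IsPositive :=
    (IsPositive.of_isStarProjection hP).smul_of_nonneg (by exact_mod_cast hδ0.le)
  have hS : ((1 / 2 : ℂ) • rankOne ℂ f f).IsPositive :=
    (isPositive_rankOne_self f).smul_of_nonneg (by positivity)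
  have hδPS : ((δ : ℂ) • P - (1 / 2 : ℂ) • rankOne ℂ f f).IsPositive := by
    convert (hTP.add hδP).smul_of_nonneg (by positivity : (0 : ℂ) ≤ 1 / 2) using 1
    module
  have hcompl : (1 - P).IsPositive := .of_isStarProjection hP.one_sub
  push_cast at hup
  refine ⟨⟨?_, ?_⟩, ?_, ?_⟩
  · convert hlow.add hδPS using 1; module
  · convert ((hcompl.add hup).add hδP).add hS using 1; module
  · convert (hlow.add hδP).add hS using 1; module
  · convert (hcompl.add hup).add hδPS using 1; module

open ContinuousLinearMap in
theorem perturbed_kernels_are_contractions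
    {H : Type*} [NormedAddCommGroup H] [InnerProductSpace ℂ H] [CompleteSpace H]
    (K P : H →L[ℂ] H) (hK : IsSelfAdjoint K)
    (hPidem : IsIdempotentElem P) (hPsa : IsSelfAdjoint P)
    (δ : ℝ) (hδ0 : 0 < δ) (hδ : δ ≤ 1/2)
    (hlow : (K - (δ : ℂ) • P).IsPositive)
    (hup : ((((1 - δ : ℝ)) : ℂ) • P - K).IsPositive)
    (f : H) (hf : P f = f) (hfn : ‖f‖ ^ 2 = δ) :
    ((K - (1/2 : ℂ) • ((innerSL ℂ f).smulRight f)).IsPositive ∧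
      ((1 : H →L[ℂ] H) - (K - (1/2 : ℂ) • ((innerSL ℂ f).smulRight f))).IsPositive) ∧
    ((K + (1/2 : ℂ) • ((innerSL ℂ f).smulRight f)).IsPositive ∧
      ((1 : H →L[ℂ] H) - (K + (1/2 : ℂ) • ((innerSL ℂ f).smulRight f))).IsPositive) :=
  perturbed_kernels_are_contractions_general K P hPidem hPsa δ hδ0 hlow hup f hf hfn
end

section
/- For β > 1/2, with μ_k = N(k, k^{2β}) and ν_k = N(k+1, (k+1)^{2β}) Gaussian measures on ℝ, the product over k ≥ 1 of the Hellinger affinities ∫√(f_k g_k) dλ converges to a positive limit; here the k-th affinity equals √(1 − (k^β − (k+1)^β)²/(k^{2β} + (k+1)^{2β})) · exp(−1/(2(k^{2β} + (k+1)^{2β}))). In particular ∑_{k≥1} (1 − ∫√(f_k g_k) dλ) < ∞. -/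
/-!
Writing the `k`-th affinity as `√(1 - r) * exp (-t)` with
`r = (k^β - (k+1)^β)² / s`, `t = 1 / (2 s)`, `s = k^{2β} + (k+1)^{2β}`, we have
`1 - √(1 - r) * exp (-t) ≤ r + t`. Since `(k / (k+1))^β ≥ 1 - β / k`, `r ≤ β² / k²`, and
`t ≤ k^{-2β}`; both are summable because `2β > 1`. A product of positive factors whose defects
`1 - A k` are summable has summable logarithms, so it converges to `exp (∑ log A k) > 0`.
-/

open Real Filter Finset Topology

/-- The Hellinger affinity of `N(x, x^{2β})` and `N(x+1, (x+1)^{2β})`, written with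
`2σσ' / (σ² + σ'²) = 1 - (σ - σ')² / (σ² + σ'²)`. -/
noncomputable def shiftedGaussianAffinity (β x : ℝ) : ℝ :=
  √(1 - (x ^ β - (x + 1) ^ β) ^ 2 / (x ^ (2 * β) + (x + 1) ^ (2 * β))) *
    exp (-1 / (2 * (x ^ (2 * β) + (x + 1) ^ (2 * β))))

lemma one_sub_sqrt_mul_exp_neg_le {r t : ℝ} (hr₀ : 0 ≤ r) (hr₁ : r ≤ 1) (ht : 0 ≤ t) :
    1 - √(1 - r) * exp (-t) ≤ r + t := by
  have hsqrt : 1 - r ≤ √(1 - r) := Real.le_sqrt_of_sq_le (by nlinarith)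
  have hexp : 1 - t ≤ exp (-t) := by linarith [add_one_le_exp (-t)]
  have hprod : (1 - r) * (1 - t) ≤ √(1 - r) * exp (-t) :=
    calc (1 - r) * (1 - t) ≤ (1 - r) * exp (-t) := mul_le_mul_of_nonneg_left hexp (by linarith)
      _ ≤ √(1 - r) * exp (-t) := mul_le_mul_of_nonneg_right hsqrt (exp_pos _).le
  nlinarith [mul_nonneg hr₀ ht]

lemma one_sub_div_add_one_rpow_le {x β : ℝ} (hx : 0 < x) (hβ : 0 ≤ β) :
    1 - (x / (x + 1)) ^ β ≤ β / x := by
  have hlog : -log (x / (x + 1)) ≤ 1 / x := by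
    rw [← log_inv, inv_div]
    have := log_le_sub_one_of_pos (show 0 < (x + 1) / x by positivity)
    rwa [show (x + 1) / x - 1 = 1 / x by field_simp; ring] at this
  calc 1 - (x / (x + 1)) ^ β = 1 - exp (log (x / (x + 1)) * β) := by
        rw [rpow_def_of_pos (by positivity)]
    _ ≤ -log (x / (x + 1)) * β := by linarith [add_one_le_exp (log (x / (x + 1)) * β)]
    _ ≤ 1 / x * β := mul_le_mul_of_nonneg_right hlog hβ
    _ = β / x := by ring

lemma rpow_two_mul_eq_sq {x : ℝ} (hx : 0 ≤ x) (β : ℝ) : x ^ (2 * β) = (x ^ β) ^ 2 := by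
  rw [mul_comm, rpow_mul hx, rpow_two]

lemma sq_sub_rpow_div_lt_one {x : ℝ} (hx : 0 < x) (β : ℝ) :
    (x ^ β - (x + 1) ^ β) ^ 2 / (x ^ (2 * β) + (x + 1) ^ (2 * β)) < 1 := by
  have ha := rpow_pos_of_pos hx β
  have hb := rpow_pos_of_pos (by linarith : 0 < x + 1) β
  rw [rpow_two_mul_eq_sq hx.le, rpow_two_mul_eq_sq (by linarith), div_lt_one (by positivity)]
  nlinarith [mul_pos ha hb]

lemma sq_sub_rpow_div_le {x β : ℝ} (hx : 0 < x) (hβ : 0 ≤ β) :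
    (x ^ β - (x + 1) ^ β) ^ 2 / (x ^ (2 * β) + (x + 1) ^ (2 * β)) ≤ (β / x) ^ 2 := by
  have hx₁ : 0 < x + 1 := by linarith
  have hb := rpow_pos_of_pos hx₁ β
  have hratio : x ^ β / (x + 1) ^ β = (x / (x + 1)) ^ β := (div_rpow hx.le hx₁.le β).symm
  have hratio_le : (x / (x + 1)) ^ β ≤ 1 :=
    rpow_le_one (by positivity) ((div_le_one hx₁).2 (by linarith)) hβ
  rw [rpow_two_mul_eq_sq hx.le, rpow_two_mul_eq_sq hx₁.le]
  calc (x ^ β - (x + 1) ^ β) ^ 2 / ((x ^ β) ^ 2 + ((x + 1) ^ β) ^ 2)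
      ≤ (x ^ β - (x + 1) ^ β) ^ 2 / ((x + 1) ^ β) ^ 2 := by
        gcongr
        linarith [sq_nonneg (x ^ β)]
    _ = (1 - (x / (x + 1)) ^ β) ^ 2 := by
        rw [← hratio]
        field_simp
        ring
    _ ≤ (β / x) ^ 2 := pow_le_pow_left₀ (by linarith) (one_sub_div_add_one_rpow_le hx hβ) 2

lemma shiftedGaussianAffinity_pos {x : ℝ} (β : ℝ) (hx : 0 < x) :
    0 < shiftedGaussianAffinity β x :=
  mul_pos (sqrt_pos.2 (sub_pos.2 (sq_sub_rpow_div_lt_one hx β))) (exp_pos _)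

lemma shiftedGaussianAffinity_le_one (β : ℝ) {x : ℝ} (hx : 0 ≤ x) :
    shiftedGaussianAffinity β x ≤ 1 := by
  have hs : 0 ≤ x ^ (2 * β) + (x + 1) ^ (2 * β) := by positivity
  refine mul_le_one₀ (sqrt_le_one.2 (sub_le_self _ (by positivity))) (exp_pos _).le
    (exp_le_one_iff.2 ?_)
  rw [neg_div, neg_nonpos]
  positivity

lemma one_sub_shiftedGaussianAffinity_le {x β : ℝ} (hx : 0 < x) (hβ : 0 ≤ β) :
    1 - shiftedGaussianAffinity β x ≤ β ^ 2 * x ^ (-2 : ℝ) + x ^ (-(2 * β)) := by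
  set s := x ^ (2 * β) + (x + 1) ^ (2 * β)
  have hs : x ^ (2 * β) ≤ s := le_add_of_nonneg_right (by positivity)
  have hs₀ : 0 < x ^ (2 * β) := rpow_pos_of_pos hx _
  have hr : (β / x) ^ 2 = β ^ 2 * x ^ (-2 : ℝ) := by
    rw [rpow_neg hx.le, rpow_two]; field_simp
  have ht : 1 / (2 * s) ≤ x ^ (-(2 * β)) := by
    rw [rpow_neg hx.le, ← one_div]
    exact one_div_le_one_div_of_le hs₀ (by linarith)
  rw [shiftedGaussianAffinity, neg_div, ← hr]
  calc _ ≤ (x ^ β - (x + 1) ^ β) ^ 2 / s + 1 / (2 * s) :=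
        one_sub_sqrt_mul_exp_neg_le (by positivity) (sq_sub_rpow_div_lt_one hx β).le (by positivity)
    _ ≤ _ := add_le_add (sq_sub_rpow_div_le hx hβ) ht

lemma summable_nat_add_one_rpow {p : ℝ} (hp : p < -1) :
    Summable fun k : ℕ => ((k : ℝ) + 1) ^ p := by
  simpa using (summable_nat_add_iff 1).2 (summable_nat_rpow.2 hp)

lemma exists_pos_tendsto_prod_of_summable_one_sub {a : ℕ → ℝ} (ha : ∀ k, 0 < a k)
    (hs : Summable fun k => 1 - a k) :
    ∃ L, 0 < L ∧ Tendsto (fun n => ∏ k ∈ range n, a k) atTop (𝓝 L) := by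
  have hlog : Summable fun k => log (a k) := by
    simpa using summable_log_one_add_of_summable (f := fun k => a k - 1) (by simpa using hs.neg)
  exact ⟨_, exp_pos _, (hasProd_of_hasSum_log ha hlog.hasSum).tendsto_prod_nat⟩

theorem kakutani_product_converges (β : ℝ) (hβ : 1/2 < β)
    (A : ℕ → ℝ)
    (hA : ∀ k : ℕ, 1 ≤ k → A k =
      Real.sqrt (1 - ((k:ℝ)^β - ((k:ℝ)+1)^β)^2 / ((k:ℝ)^(2*β) + ((k:ℝ)+1)^(2*β))) *
        Real.exp (-1 / (2 * ((k:ℝ)^(2*β) + ((k:ℝ)+1)^(2*β))))) :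
    (∃ L : ℝ, 0 < L ∧
      Filter.Tendsto (fun n => ∏ k ∈ Finset.Icc 1 n, A k) Filter.atTop (nhds L)) ∧
    Summable (fun k : ℕ => 1 - A (k+1)) := by
  have hA' (k : ℕ) : A (k + 1) = shiftedGaussianAffinity β ((k : ℝ) + 1) := by
    simpa [shiftedGaussianAffinity] using hA (k + 1) k.succ_pos
  have hpos (k : ℕ) : 0 < A (k + 1) := hA' k ▸ shiftedGaussianAffinity_pos β k.cast_add_one_pos
  have hsum : Summable fun k : ℕ => 1 - A (k + 1) := by
    refine Summable.of_nonneg_of_le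
      (fun k => sub_nonneg.2 (hA' k ▸ shiftedGaussianAffinity_le_one β k.cast_add_one_pos.le))
      (fun k => hA' k ▸ one_sub_shiftedGaussianAffinity_le k.cast_add_one_pos (by linarith))
      (((summable_nat_add_one_rpow (by norm_num)).mul_left (β ^ 2)).add
        (summable_nat_add_one_rpow (by linarith)))
  refine ⟨?_, hsum⟩
  obtain ⟨L, hL, hlim⟩ := exists_pos_tendsto_prod_of_summable_one_sub hpos hsum
  refine ⟨L, hL, hlim.congr fun n => ?_⟩
  rw [← Finset.Ico_add_one_right_eq_Icc, Finset.prod_Ico_eq_prod_range, add_tsub_cancel_right]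
  simp only [add_comm]
end

section
/- Let ν be a probability measure on [0,∞) with all moments finite, c_j = (∫ x^j dν)^{-1}, μ_j = c_j/c_{j+1}, and let Γ_j (j ≥ 1) be independent with Γ_j having density c_j x^j with respect to ν. If ∑_{j≥1} (μ_{j+1}/μ_j − 1) < ∞ (each term being nonnegative), then the infinite product ∏_{j≥1} (Γ_j/μ_j) converges almost surely to a limit Z, and P(Z > 0) > 0. -/
/-!
Put `X i = Γ (i + 1) / μ (i + 1)`. Integrating against the density gives
`E[Γ_j ^ k] = c_j / c_{j+k}`, so the `X i` are independent with mean one and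
`Var (X i) = μ_{i+2} / μ_{i+1} - 1`. Their partial products `M_n` form a martingale with
`E[M_n ^ 2] = ∏ (1 + Var X_i) ≤ exp (∑ Var X_i)`. A martingale bounded in `L²` is uniformly
integrable, so it converges a.s. to a limit `Z` with `E Z = E M_0 = 1`, and then `Z > 0` on a set
of positive probability.
-/

open MeasureTheory ProbabilityTheory Filter Finset
open scoped ENNReal NNReal Topology

lemma MeasureTheory.uniformIntegrable_of_integral_sq_le {ι α : Type*} {_ : MeasurableSpace α}
    {μ : Measure α} [IsFiniteMeasure μ] {f : ι → α → ℝ} (hf : ∀ i, MemLp (f i) 2 μ) {B : ℝ}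
    (hB : ∀ i, ∫ x, f i x ^ 2 ∂μ ≤ B) : UniformIntegrable f 1 μ := by
  refine uniformIntegrable_of le_rfl ENNReal.one_ne_top (fun i => (hf i).1) fun ε hε => ?_
  set C : ℝ≥0 := (B / ε).toNNReal + 1
  have hC : 0 < (C : ℝ) := by positivity
  refine ⟨C, fun i => ?_⟩
  have hpt : ∀ x, ‖{x | C ≤ ‖f i x‖₊}.indicator (f i) x‖ ≤ f i x ^ 2 / C := by
    intro x
    by_cases hx : C ≤ ‖f i x‖₊
    · have hx' : (C : ℝ) ≤ ‖f i x‖ := hx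
      rw [Set.indicator_of_mem (show x ∈ {x | C ≤ ‖f i x‖₊} from hx), le_div_iff₀ hC,
        ← sq_abs, ← Real.norm_eq_abs, sq]
      exact mul_le_mul_of_nonneg_left hx' (norm_nonneg _)
    · rw [Set.indicator_of_notMem (show x ∉ {x | C ≤ ‖f i x‖₊} from hx), norm_zero]
      positivity
  have hint : Integrable (fun x => f i x ^ 2 / C) μ := (hf i).integrable_sq.div_const _
  calc eLpNorm ({x | C ≤ ‖f i x‖₊}.indicator (f i)) 1 μ
      ≤ eLpNorm (fun x => f i x ^ 2 / C) 1 μ := eLpNorm_mono_real hpt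
    _ = ENNReal.ofReal (∫ x, f i x ^ 2 / C ∂μ) := by
        rw [eLpNorm_one_eq_lintegral_enorm, ← ofReal_integral_norm_eq_lintegral_enorm hint]
        congr 2 with x
        exact Real.norm_of_nonneg (by positivity)
    _ ≤ ENNReal.ofReal ε := by
        refine ENNReal.ofReal_le_ofReal ?_
        rw [integral_div, div_le_iff₀ hC]
        calc ∫ x, f i x ^ 2 ∂μ ≤ B := hB i
          _ ≤ ε * C := by
            rw [← div_le_iff₀' hε]
            exact (Real.le_coe_toNNReal _).trans (by simp [C])

lemma MeasureTheory.measure_setOf_pos_pos_of_integral_pos {α : Type*} [MeasurableSpace α]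
    {μ : Measure α} {f : α → ℝ} (hf : 0 < ∫ x, f x ∂μ) : 0 < μ {x | 0 < f x} := by
  refine pos_iff_ne_zero.2 fun h => hf.not_ge (integral_nonpos_of_ae ?_)
  filter_upwards [measure_eq_zero_iff_ae_notMem.1 h] with x hx
  exact not_lt.1 hx

namespace ProbabilityTheory.iIndepFun

variable {Ω : Type*} [MeasurableSpace Ω] {P : Measure Ω} {X : ℕ → Ω → ℝ}

lemma integrable_prod_range (hX : iIndepFun X P) (hmeas : ∀ j, Measurable (X j))
    (hint : ∀ j, Integrable (X j) P) (n : ℕ) : Integrable (∏ j ∈ range n, X j) P := by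
  have := hX.isProbabilityMeasure
  induction n with
  | zero => exact integrable_const (1 : ℝ)
  | succ n ih =>
    rw [prod_range_succ]
    exact (hX.indepFun_prod_range_succ hmeas n).integrable_mul ih (hint n)

lemma integral_prod_range (hX : iIndepFun X P) (hmeas : ∀ j, Measurable (X j)) (n : ℕ) :
    P[∏ j ∈ range n, X j] = ∏ j ∈ range n, P[X j] := by
  have := hX.isProbabilityMeasure
  induction n with
  | zero => simp
  | succ n ih =>
    rw [prod_range_succ, prod_range_succ, ← ih]
    exact (hX.indepFun_prod_range_succ hmeas n).integral_mul_eq_mul_integral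
      (Finset.aestronglyMeasurable_prod _ fun j _ => (hmeas j).aestronglyMeasurable)
      (hmeas n).aestronglyMeasurable

lemma martingale_prod_range_succ (hX : iIndepFun X P) (hmeas : ∀ j, Measurable (X j))
    (hint : ∀ j, Integrable (X j) P) (hmean : ∀ j, P[X j] = 1) :
    Martingale (fun n => ∏ j ∈ range (n + 1), X j)
      (Filtration.natural X fun j => (hmeas j).stronglyMeasurable) P := by
  have := hX.isProbabilityMeasure
  set ℱ := Filtration.natural X fun j => (hmeas j).stronglyMeasurable
  have hadapted : StronglyAdapted ℱ fun n => ∏ j ∈ range (n + 1), X j := fun n =>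
    Finset.stronglyMeasurable_prod _ fun j hj =>
      (Filtration.stronglyAdapted_natural _ j).mono (ℱ.mono (Nat.lt_succ_iff.1 (mem_range.1 hj)))
  refine martingale_nat hadapted (fun n => hX.integrable_prod_range hmeas hint _) fun n => ?_
  have hcond : P[X (n + 1) | ℱ n] =ᵐ[P] fun _ => 1 := by
    simpa only [hmean] using hX.condExp_natural_ae_eq_of_lt _ n.lt_succ_self
  have hpull := condExp_mul_of_stronglyMeasurable_left (hadapted n)
    (by simpa only [← prod_range_succ] using hX.integrable_prod_range hmeas hint (n + 2))
    (hint (n + 1))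
  rw [prod_range_succ _ (n + 1)]
  filter_upwards [hpull, hcond] with ω h1 h2
  simp [h1, h2]

lemma pow (hX : iIndepFun X P) (k : ℕ) : iIndepFun (fun j => X j ^ k) P := by
  convert hX.comp (fun _ x => x ^ k) fun _ => measurable_id.pow_const k using 1
  rfl

lemma memLp_two_prod_range (hX : iIndepFun X P) (hmeas : ∀ j, Measurable (X j))
    (hL2 : ∀ j, MemLp (X j) 2 P) (n : ℕ) : MemLp (∏ j ∈ range n, X j) 2 P := by
  refine (memLp_two_iff_integrable_sq
    (Finset.aestronglyMeasurable_prod _ fun j _ => (hmeas j).aestronglyMeasurable)).2 ?_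
  show Integrable ((∏ j ∈ range n, X j) ^ 2) P
  rw [← prod_pow]
  exact (hX.pow 2).integrable_prod_range (fun j => (hmeas j).pow_const 2)
      (fun j => (hL2 j).integrable_sq) n

lemma integral_sq_prod_range_le_exp_tsum_variance (hX : iIndepFun X P)
    (hmeas : ∀ j, Measurable (X j)) (hL2 : ∀ j, MemLp (X j) 2 P) (hmean : ∀ j, P[X j] = 1)
    (hvar : Summable fun j => Var[X j; P]) (n : ℕ) :
    P[(∏ j ∈ range n, X j) ^ 2] ≤ Real.exp (∑' j, Var[X j; P]) := by
  have := hX.isProbabilityMeasure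
  have hsecond : ∀ j, P[X j ^ 2] = 1 + Var[X j; P] := fun j => by
    rw [variance_eq_sub (hL2 j), hmean j]; ring
  calc P[(∏ j ∈ range n, X j) ^ 2] = ∏ j ∈ range n, (1 + Var[X j; P]) := by
        rw [← prod_pow, (hX.pow 2).integral_prod_range (fun j => (hmeas j).pow_const 2)]
        exact prod_congr rfl fun j _ => hsecond j
    _ ≤ Real.exp (∑ j ∈ range n, Var[X j; P]) :=
        Real.prod_one_add_le_exp_sum _ fun j => variance_nonneg _ _
    _ ≤ Real.exp (∑' j, Var[X j; P]) :=
        Real.exp_le_exp.2 (hvar.sum_le_tsum _ fun j _ => variance_nonneg _ _)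

theorem exists_ae_tendsto_prod_range (hX : iIndepFun X P) (hmeas : ∀ j, Measurable (X j))
    (hL2 : ∀ j, MemLp (X j) 2 P) (hmean : ∀ j, P[X j] = 1)
    (hvar : Summable fun j => Var[X j; P]) :
    ∃ Z : Ω → ℝ, (∀ᵐ ω ∂P, Tendsto (fun n => ∏ j ∈ range n, X j ω) atTop (𝓝 (Z ω))) ∧
      P[Z] = 1 := by
  have := hX.isProbabilityMeasure
  set ℱ := Filtration.natural X fun j => (hmeas j).stronglyMeasurable
  set M : ℕ → Ω → ℝ := fun n => ∏ j ∈ range (n + 1), X j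
  have hmart : Martingale M ℱ P :=
    hX.martingale_prod_range_succ hmeas (fun j => (hL2 j).integrable one_le_two) hmean
  have hUI : UniformIntegrable M 1 P :=
    uniformIntegrable_of_integral_sq_le (fun n => hX.memLp_two_prod_range hmeas hL2 _)
      fun n => by
        simpa only [Pi.pow_apply] using
          hX.integral_sq_prod_range_le_exp_tsum_variance hmeas hL2 hmean hvar (n + 1)
  refine ⟨ℱ.limitProcess M P, ?_, ?_⟩
  · filter_upwards [hmart.submartingale.ae_tendsto_limitProcess_of_uniformIntegrable hUI]
      with ω hω
    refine (tendsto_add_atTop_iff_nat 1).1 ?_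
    simpa only [M, Finset.prod_apply] using hω
  · calc ∫ ω, ℱ.limitProcess M P ω ∂P = ∫ ω, P[ℱ.limitProcess M P | ℱ 0] ω ∂P :=
          (integral_condExp (ℱ.le 0)).symm
      _ = ∫ ω, M 0 ω ∂P := integral_congr_ae (hmart.ae_eq_condExp_limitProcess hUI 0).symm
      _ = 1 := by simpa [M] using hmean 0

end ProbabilityTheory.iIndepFun

section Density

variable {Ω : Type*} [MeasurableSpace Ω] {P : Measure Ω} {ν : Measure ℝ} {Y : Ω → ℝ}
  {g f : ℝ → ℝ}

lemma toReal_ofReal_smul_ae_eq (hg0 : 0 ≤ᵐ[ν] g) :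
    (fun x => (ENNReal.ofReal (g x)).toReal • f x) =ᵐ[ν] fun x => g x * f x := by
  filter_upwards [hg0] with x hx
  rw [ENNReal.toReal_ofReal hx, smul_eq_mul]

lemma integrable_comp_of_map_eq_withDensity (hY : AEMeasurable Y P) (hg : Measurable g)
    (hg0 : 0 ≤ᵐ[ν] g) (hlaw : P.map Y = ν.withDensity fun x => ENNReal.ofReal (g x))
    (hfg : Integrable (fun x => g x * f x) ν) :
    Integrable (fun ω => f (Y ω)) P := by
  have hmap : Integrable f (P.map Y) := by
    rw [hlaw, integrable_withDensity_iff_integrable_smul' hg.ennreal_ofReal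
      (ae_of_all _ fun _ => ENNReal.ofReal_lt_top)]
    exact hfg.congr (toReal_ofReal_smul_ae_eq hg0).symm
  exact hmap.comp_aemeasurable hY

lemma integral_comp_of_map_eq_withDensity (hY : AEMeasurable Y P) (hg : Measurable g)
    (hg0 : 0 ≤ᵐ[ν] g) (hlaw : P.map Y = ν.withDensity fun x => ENNReal.ofReal (g x))
    (hf : Measurable f) : ∫ ω, f (Y ω) ∂P = ∫ x, g x * f x ∂ν := by
  rw [← integral_map hY hf.aestronglyMeasurable, hlaw,
    integral_withDensity_eq_integral_toReal_smul hg.ennreal_ofReal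
      (ae_of_all _ fun _ => ENNReal.ofReal_lt_top)]
  exact integral_congr_ae (toReal_ofReal_smul_ae_eq hg0)

lemma integrable_pow_of_map_eq_withDensity_pow (hY : AEMeasurable Y P) (hpos : ∀ᵐ x ∂ν, 0 ≤ x)
    {c : ℝ} (hc : 0 ≤ c) {j : ℕ}
    (hlaw : P.map Y = ν.withDensity fun x => ENNReal.ofReal (c * x ^ j)) {k : ℕ}
    (hmom : Integrable (fun x => x ^ (j + k)) ν) : Integrable (fun ω => Y ω ^ k) P :=
  integrable_comp_of_map_eq_withDensity (f := fun x => x ^ k) hY (by fun_prop)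
    (by filter_upwards [hpos] with x hx using mul_nonneg hc (pow_nonneg hx j)) hlaw
    (by simpa only [mul_assoc, ← pow_add] using hmom.const_mul c)

lemma integral_pow_of_map_eq_withDensity_pow (hY : AEMeasurable Y P) (hpos : ∀ᵐ x ∂ν, 0 ≤ x)
    {c : ℝ} (hc : 0 ≤ c) {j : ℕ}
    (hlaw : P.map Y = ν.withDensity fun x => ENNReal.ofReal (c * x ^ j)) (k : ℕ) :
    ∫ ω, Y ω ^ k ∂P = c * ∫ x, x ^ (j + k) ∂ν := by
  rw [integral_comp_of_map_eq_withDensity (f := fun x => x ^ k) hY (by fun_prop)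
    (by filter_upwards [hpos] with x hx using mul_nonneg hc (pow_nonneg hx j)) hlaw
    (measurable_id.pow_const k), ← integral_const_mul]
  simp only [mul_assoc, ← pow_add]

end Density

open MeasureTheory ProbabilityTheory in
theorem infinite_product_converges_general
    {Ω : Type*} [MeasurableSpace Ω] (P : Measure Ω) [IsProbabilityMeasure P]
    (ν : Measure ℝ) (hpos : ∀ᵐ x ∂ν, 0 ≤ x)
    (hmom : ∀ j : ℕ, Integrable (fun x => x ^ j) ν)
    (hposmom : ∀ j : ℕ, 0 < ∫ x, x ^ j ∂ν)
    (c m : ℕ → ℝ) (hc : ∀ j, c j = (∫ x, x ^ j ∂ν)⁻¹) (hm : ∀ j, m j = c j / c (j+1))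
    (Γ : ℕ → Ω → ℝ) (hmeas : ∀ j, Measurable (Γ j))
    (hindep : iIndepFun Γ P)
    (hlaw : ∀ j, 1 ≤ j →
      Measure.map (Γ j) P = ν.withDensity (fun x => ENNReal.ofReal (c j * x ^ j)))
    (hsum : Summable (fun j : ℕ => m (j+2) / m (j+1) - 1)) :
    ∃ Z : Ω → ℝ,
      (∀ᵐ ω ∂P, Filter.Tendsto (fun n => ∏ j ∈ Finset.Icc 1 n, Γ j ω / m j)
        Filter.atTop (nhds (Z ω))) ∧
      0 < P {ω | 0 < Z ω} := by
  have hcpos : ∀ j, 0 < c j := fun j => by rw [hc]; exact inv_pos.2 (hposmom j)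
  set X : ℕ → Ω → ℝ := fun i ω => Γ (i + 1) ω / m (i + 1)
  have hX : iIndepFun X P := by
    convert (hindep.precomp Nat.succ_injective).comp (fun i x => x / m (i + 1))
      (fun i => measurable_id.div_const _) using 1
    rfl
  have hXL2 : ∀ i, MemLp (X i) 2 P := fun i =>
    (memLp_two_iff_integrable_sq ((hmeas _).div_const _).aestronglyMeasurable).2 <| by
      simpa only [X, div_pow] using (integrable_pow_of_map_eq_withDensity_pow (hmeas _).aemeasurable
        hpos (hcpos _).le (hlaw (i + 1) (Nat.le_add_left 1 i)) (hmom _)).div_const (m (i + 1) ^ 2)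
  have hXmom : ∀ i k, P[X i ^ k] = c (i + 1) / c (i + 1 + k) / m (i + 1) ^ k := fun i k => by
    simp only [X, Pi.pow_apply, div_pow, integral_div]
    rw [integral_pow_of_map_eq_withDensity_pow (hmeas _).aemeasurable hpos (hcpos _).le
      (hlaw (i + 1) (Nat.le_add_left 1 i)), hc (i + 1 + k), div_inv_eq_mul, div_eq_mul_inv]
  have hXmean : ∀ i, P[X i] = 1 := fun i => by
    rw [← pow_one (X i), hXmom, pow_one, hm]
    field_simp [(hcpos (i + 1)).ne', (hcpos (i + 1 + 1)).ne']
  have hXvar : ∀ i, Var[X i; P] = m (i + 2) / m (i + 1) - 1 := fun i => by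
    rw [variance_eq_sub (hXL2 i), hXmean, hXmom, hm, hm]
    field_simp [(hcpos (i + 1)).ne', (hcpos (i + 2)).ne', (hcpos (i + 3)).ne']
  obtain ⟨Z, hZ, hZ1⟩ := hX.exists_ae_tendsto_prod_range (fun i => (hmeas _).div_const _) hXL2
    hXmean (by simpa only [hXvar] using hsum)
  refine ⟨Z, ?_, measure_setOf_pos_pos_of_integral_pos (hZ1 ▸ one_pos)⟩
  filter_upwards [hZ] with ω hω
  convert hω using 2 with n
  rw [range_eq_Ico, prod_Ico_add' (fun j => Γ j ω / m j) 0 n 1, zero_add,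
    Ico_add_one_right_eq_Icc]

open MeasureTheory ProbabilityTheory in
theorem infinite_product_converges
    {Ω : Type*} [MeasurableSpace Ω] (P : Measure Ω) [IsProbabilityMeasure P]
    (ν : Measure ℝ) [IsProbabilityMeasure ν] (hpos : ∀ᵐ x ∂ν, 0 ≤ x)
    (hmom : ∀ j : ℕ, Integrable (fun x => x ^ j) ν)
    (hposmom : ∀ j : ℕ, 0 < ∫ x, x ^ j ∂ν)
    (c m : ℕ → ℝ) (hc : ∀ j, c j = (∫ x, x ^ j ∂ν)⁻¹) (hm : ∀ j, m j = c j / c (j+1))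
    (Γ : ℕ → Ω → ℝ) (hmeas : ∀ j, Measurable (Γ j))
    (hindep : iIndepFun Γ P)
    (hlaw : ∀ j, 1 ≤ j →
      Measure.map (Γ j) P = ν.withDensity (fun x => ENNReal.ofReal (c j * x ^ j)))
    (hnonneg : ∀ j : ℕ, 0 ≤ m (j+2) / m (j+1) - 1)
    (hsum : Summable (fun j : ℕ => m (j+2) / m (j+1) - 1)) :
    ∃ Z : Ω → ℝ,
      (∀ᵐ ω ∂P, Filter.Tendsto (fun n => ∏ j ∈ Finset.Icc 1 n, Γ j ω / m j)
        Filter.atTop (nhds (Z ω))) ∧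
      0 < P {ω | 0 < Z ω} :=
  infinite_product_converges_general P ν hpos hmom hposmom c m hc hm Γ hmeas hindep hlaw hsum
end
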